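/- arXiv:math/0208221 — 3 statements merged into one kernel-verified Lean document; each statement's English description precedes it below -/
import Mathlib

section
/- There is no continuous map f from the unit sphere S³ = { z ∈ ℂ² : ‖z‖ = 1 } to the unit circle S¹ = { w ∈ ℂ : |w| = 1 } that is equivariant for the ℤ/3-actions given by scalar multiplication by ω = exp(2πi/3); that is, there is no continuous f : S³ → S¹ satisfying f(ω·z) = ω·f(z) for all z ∈ S³, where ω·(z₁,z₂) = (ωz₁, ωz₂). -/
open Complex

/-!
Compose `f` with a map `ℂ → S³` restricting to `z ↦ (z, 0)` on the unit circle. As `ℂ` is simply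
connected, the composite lifts through the covering `t ↦ exp (t * I)` of the circle, so its
restriction `h` to the unit circle has a continuous real logarithm `θ`. Equivariance gives
`h (ζ * z) = ζ * h z` for `ζ = exp (2πi/3)`, so `θ (ζ * z) - θ z` is a constant `c` with
`exp (c * I) = ζ`; going around the circle three times forces `3 * c = 0`, hence `ζ = 1`.
-/

theorem exists_continuous_circleExp_lift {A : Type*} [TopologicalSpace A]
    [SimplyConnectedSpace A] [LocallyPathConnectedSpace A] (g : C(A, Circle)) :
    ∃ θ : C(A, ℝ), ∀ a, Circle.exp (θ a) = g a := by
  obtain ⟨a₀⟩ := (inferInstance : Nonempty A)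
  obtain ⟨t₀, ht₀⟩ := Circle.exp_surjective (g a₀)
  obtain ⟨θ, -, hθ⟩ :=
    (Circle.isCoveringMap_exp.existsUnique_continuousMap_lifts g a₀ t₀ ht₀).exists
  exact ⟨θ, congrFun hθ⟩

theorem Circle.isPrimitiveRoot_exp_two_pi_div (n : ℕ) (hn : n ≠ 0) :
    IsPrimitiveRoot (Circle.exp (2 * Real.pi / n)) n := by
  refine .of_map_of_injective (f := Circle.coeHom) ?_ Circle.coe_injective
  convert isPrimitiveRoot_exp n hn using 2
  change ((Circle.exp _ : Circle) : ℂ) = _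
  push_cast
  rw [div_mul_eq_mul_div]

theorem not_exists_continuous_circleExp_lift_of_mul_equivariant {ζ : Circle}
    (hζ : IsOfFinOrder ζ) (hζ₁ : ζ ≠ 1) {h : Circle → Circle} (hh : ∀ z, h (ζ * z) = ζ * h z) :
    ¬ ∃ θ : Circle → ℝ, Continuous θ ∧ ∀ z, Circle.exp (θ z) = h z := by
  rintro ⟨θ, hθc, hθ⟩
  have hexp_shift : ∀ z, Circle.exp (θ (ζ * z) - θ z) = ζ := fun z => by
    rw [Circle.exp_sub, hθ, hθ, hh, mul_div_cancel_right]
  have hshift_const : ∀ z, θ (ζ * z) - θ z = θ ζ - θ 1 := fun z => by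
    simpa using Circle.isCoveringMap_exp.const_of_comp
      ((hθc.comp (continuous_const.mul continuous_id)).sub hθc)
      (fun z z' => (hexp_shift z).trans (hexp_shift z').symm) z 1
  have hpow : ∀ k : ℕ, θ (ζ ^ k) = θ 1 + k * (θ ζ - θ 1) := fun k => by
    induction k with
    | zero => simp
    | succ k ih => rw [pow_succ']; push_cast; linarith [hshift_const (ζ ^ k)]
  obtain ⟨n, hn, hζn⟩ := hζ.exists_pow_eq_one
  have hzero : θ ζ - θ 1 = 0 := by
    have hn' : (n : ℝ) ≠ 0 := by exact_mod_cast hn.ne'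
    have := hpow n
    rw [hζn, left_eq_add, mul_eq_zero] at this
    exact this.resolve_left hn'
  exact hζ₁ (by rw [← hexp_shift 1, mul_one, hzero, Circle.exp_zero])

noncomputable def planeToSphere (w : ℂ) : EuclideanSpace ℂ (Fin 2) :=
  ‖!₂[w, ((1 - ‖w‖ : ℝ) : ℂ)]‖⁻¹ • !₂[w, ((1 - ‖w‖ : ℝ) : ℂ)]

lemma pair_one_sub_norm_ne_zero (w : ℂ) : !₂[w, ((1 - ‖w‖ : ℝ) : ℂ)] ≠ 0 := by
  intro h
  have h0 : w = 0 := by simpa using congrArg (· 0) h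
  simpa [h0] using congrArg (· 1) h

lemma norm_planeToSphere (w : ℂ) : ‖planeToSphere w‖ = 1 :=
  norm_smul_inv_norm (pair_one_sub_norm_ne_zero w)

lemma continuous_planeToSphere : Continuous planeToSphere := by
  unfold planeToSphere
  have : Continuous fun w : ℂ => !₂[w, ((1 - ‖w‖ : ℝ) : ℂ)] := by fun_prop
  exact (this.norm.inv₀ fun w => norm_ne_zero_iff.2 (pair_one_sub_norm_ne_zero w)).smul this

lemma planeToSphere_of_norm_eq_one {w : ℂ} (hw : ‖w‖ = 1) : planeToSphere w = !₂[w, 0] := by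
  have : ‖!₂[w, (0 : ℂ)]‖ = 1 := by simp [EuclideanSpace.norm_eq, hw]
  simp [planeToSphere, hw, this]

lemma planeToSphere_mul {c w : ℂ} (hc : ‖c‖ = 1) (hw : ‖w‖ = 1) :
    planeToSphere (c * w) = c • planeToSphere w := by
  rw [planeToSphere_of_norm_eq_one (by rw [norm_mul, hc, hw, one_mul]),
    planeToSphere_of_norm_eq_one hw]
  ext i; fin_cases i <;> simp

/-- There is no continuous `ℤ/3`-equivariant map from `S³ ⊂ ℂ²` to `S¹ ⊂ ℂ`, where the
actions are by scalar multiplication by `ω = exp(2πi/3)`. -/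
theorem no_equivariant_map_S3_to_S1
    (ω : ℂ) (hω : ω = Complex.exp (2 * Real.pi * Complex.I / 3)) :
    ¬ ∃ f : {z : EuclideanSpace ℂ (Fin 2) // ‖z‖ = 1} → {w : ℂ // ‖w‖ = 1},
      Continuous f ∧
      ∀ (z : {z : EuclideanSpace ℂ (Fin 2) // ‖z‖ = 1})
        (h : ‖ω • (z : EuclideanSpace ℂ (Fin 2))‖ = 1),
        (f ⟨ω • (z : EuclideanSpace ℂ (Fin 2)), h⟩ : ℂ) = ω * (f z : ℂ) := by
  rintro ⟨f, hf, hf_equiv⟩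
  let ζ : Circle := Circle.exp (2 * Real.pi / 3)
  have hζω : (ζ : ℂ) = ω := by rw [hω, Circle.coe_exp]; push_cast; rw [div_mul_eq_mul_div]
  have hζ : IsPrimitiveRoot ζ 3 := by
    exact_mod_cast Circle.isPrimitiveRoot_exp_two_pi_div 3 three_ne_zero
  let g : C(ℂ, Circle) :=
    ⟨fun w => ⟨f ⟨planeToSphere w, norm_planeToSphere w⟩, mem_sphere_zero_iff_norm.2 (f _).2⟩,
      (continuous_subtype_val.comp (hf.comp (continuous_planeToSphere.subtype_mk _))).subtype_mk _⟩
  have hg_equiv : ∀ z : Circle, g (ζ * z) = ζ * g z := fun z => by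
    have hωz : ‖ω • planeToSphere z‖ = 1 := by
      rw [norm_smul, ← hζω, Circle.norm_coe, norm_planeToSphere, one_mul]
    have hsphere : planeToSphere (ω * z) = ω • planeToSphere z := by
      rw [← hζω]; exact planeToSphere_mul (Circle.norm_coe ζ) (Circle.norm_coe z)
    ext
    change (f ⟨planeToSphere (ζ * z), _⟩ : ℂ) = ζ * f ⟨planeToSphere z, _⟩
    rw [hζω, ← hf_equiv ⟨planeToSphere z, norm_planeToSphere z⟩ hωz]
    simp only [hsphere]
  obtain ⟨θ, hθ⟩ := exists_continuous_circleExp_lift g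
  exact not_exists_continuous_circleExp_lift_of_mul_equivariant (hζ.isOfFinOrder three_ne_zero)
    (hζ.ne_one (by norm_num)) hg_equiv
    ⟨fun z => θ z, θ.continuous.comp continuous_subtype_val, fun z => hθ z⟩
end

section
/- For ℝ² equipped with the Minkowski (ℓ¹) metric ρ((x₁,y₁),(x₂,y₂)) = |x₁−x₂| + |y₁−y₂|, the Borsuk number equals 4: (a) every compact set F ⊆ ℝ² with positive ℓ¹-diameter can be written as a union of four sets each of ℓ¹-diameter strictly smaller than that of F; and (b) the closed ℓ¹ unit ball { (x,y) : |x| + |y| ≤ 1 }, which has ℓ¹-diameter 2, cannot be written as a union of three sets each of ℓ¹-diameter strictly less than 2. -/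
/-- The Minkowski (ℓ¹) metric on ℝ². -/
def l1dist (p q : ℝ × ℝ) : ℝ := |p.1 - q.1| + |p.2 - q.2|

/-- The diameter of a subset of ℝ² with respect to the ℓ¹ metric. -/
noncomputable def l1diam (F : Set (ℝ × ℝ)) : ℝ :=
  sSup {r : ℝ | ∃ p ∈ F, ∃ q ∈ F, l1dist p q = r}

lemma abs_sub'' (a b : ℝ) : |a - b| ≤ |a| + |b| := by
  rw [sub_eq_add_neg]
  exact (abs_add_le _ _).trans_eq (by rw [abs_neg])

lemma l1dist_le_of {p q : ℝ × ℝ} {k : ℝ}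
    (h1 : |(p.1 + p.2) - (q.1 + q.2)| ≤ k)
    (h2 : |(p.1 - p.2) - (q.1 - q.2)| ≤ k) : l1dist p q ≤ k := by
  rw [abs_le] at h1 h2
  unfold l1dist
  rcases abs_cases (p.1 - q.1) with ⟨e1, _⟩ | ⟨e1, _⟩ <;>
    rcases abs_cases (p.2 - q.2) with ⟨e2, _⟩ | ⟨e2, _⟩ <;> rw [e1, e2] <;> linarith

lemma l1diam_le {S : Set (ℝ × ℝ)} {k : ℝ} (hk : 0 ≤ k)
    (h : ∀ p ∈ S, ∀ q ∈ S, l1dist p q ≤ k) : l1diam S ≤ k := by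
  apply Real.sSup_le _ hk
  rintro r ⟨p, hp, q, hq, rfl⟩
  exact h p hp q hq

lemma le_l1diam {S : Set (ℝ × ℝ)} {M : ℝ} (hb : ∀ p ∈ S, ‖p‖ ≤ M)
    {p q : ℝ × ℝ} (hp : p ∈ S) (hq : q ∈ S) : l1dist p q ≤ l1diam S := by
  apply le_csSup
  · refine ⟨4 * M, ?_⟩
    rintro r ⟨p', hp', q', hq', rfl⟩
    have h1 := hb p' hp'
    have h2 := hb q' hq'
    have a1 : |p'.1| ≤ M := le_trans (by simpa using norm_fst_le p') h1
    have a2 : |p'.2| ≤ M := le_trans (by simpa using norm_snd_le p') h1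
    have b1 : |q'.1| ≤ M := le_trans (by simpa using norm_fst_le q') h2
    have b2 : |q'.2| ≤ M := le_trans (by simpa using norm_snd_le q') h2
    have c1 := abs_sub'' p'.1 q'.1
    have c2 := abs_sub'' p'.2 q'.2
    unfold l1dist
    linarith
  · exact ⟨p, hp, q, hq, rfl⟩

/-- The Borsuk number of the plane with the Minkowski (ℓ¹) metric equals 4. -/
theorem borsuk_number_l1_plane_eq_four :
    -- (a) every compact set of positive ℓ¹-diameter splits into four parts of smaller
    -- ℓ¹-diameter
    (∀ F : Set (ℝ × ℝ), IsCompact F → 0 < l1diam F →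
      ∃ A B C D : Set (ℝ × ℝ), F = A ∪ B ∪ C ∪ D ∧
        l1diam A < l1diam F ∧ l1diam B < l1diam F ∧
        l1diam C < l1diam F ∧ l1diam D < l1diam F)
    ∧
    -- (b) the closed ℓ¹ unit ball has ℓ¹-diameter 2 and is not a union of three sets of
    -- ℓ¹-diameter strictly less than 2
    (l1diam {p : ℝ × ℝ | |p.1| + |p.2| ≤ 1} = 2 ∧
      ¬ ∃ A B C : Set (ℝ × ℝ),
        {p : ℝ × ℝ | |p.1| + |p.2| ≤ 1} = A ∪ B ∪ C ∧
        l1diam A < 2 ∧ l1diam B < 2 ∧ l1diam C < 2) := by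
  constructor
  · -- part (a)
    intro F hF hd
    have hne : F.Nonempty := by
      by_contra h
      rw [Set.not_nonempty_iff_eq_empty] at h
      subst h
      have : l1diam (∅ : Set (ℝ × ℝ)) = 0 := by
        unfold l1diam
        convert Real.sSup_empty using 2
        ext r; simp
      rw [this] at hd
      exact lt_irrefl _ hd
    obtain ⟨M, hM⟩ := isBounded_iff_forall_norm_le.mp hF.isBounded
    have hdist : ∀ p ∈ F, ∀ q ∈ F, l1dist p q ≤ l1diam F := fun p hp q hq => le_l1diam hM hp hq
    set U : Set ℝ := (fun p : ℝ × ℝ => p.1 + p.2) '' F with hU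
    set V : Set ℝ := (fun p : ℝ × ℝ => p.1 - p.2) '' F with hV
    have hUne : U.Nonempty := hne.image _
    have hVne : V.Nonempty := hne.image _
    have normb : ∀ p ∈ F, |p.1| ≤ M ∧ |p.2| ≤ M := by
      intro p hp
      exact ⟨le_trans (by simpa using norm_fst_le p) (hM p hp),
             le_trans (by simpa using norm_snd_le p) (hM p hp)⟩
    have hUbdd : BddAbove U := by
      refine ⟨2 * M, ?_⟩
      rintro x ⟨p, hp, rfl⟩
      obtain ⟨h1, h2⟩ := normb p hp
      have := le_abs_self p.1; have := le_abs_self p.2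
      dsimp only; linarith
    have hUbddb : BddBelow U := by
      refine ⟨-(2 * M), ?_⟩
      rintro x ⟨p, hp, rfl⟩
      obtain ⟨h1, h2⟩ := normb p hp
      have := neg_abs_le p.1; have := neg_abs_le p.2
      dsimp only; linarith
    have hVbdd : BddAbove V := by
      refine ⟨2 * M, ?_⟩
      rintro x ⟨p, hp, rfl⟩
      obtain ⟨h1, h2⟩ := normb p hp
      have := le_abs_self p.1; have := neg_abs_le p.2
      dsimp only; linarith
    have hVbddb : BddBelow V := by
      refine ⟨-(2 * M), ?_⟩
      rintro x ⟨p, hp, rfl⟩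
      obtain ⟨h1, h2⟩ := normb p hp
      have := neg_abs_le p.1; have := le_abs_self p.2
      dsimp only; linarith
    set a := sInf U with hadef
    set b := sSup U with hbdef
    set c := sInf V with hcdef
    set e := sSup V with hedef
    have hua : ∀ p ∈ F, a ≤ p.1 + p.2 := fun p hp => csInf_le hUbddb ⟨p, hp, rfl⟩
    have hub : ∀ p ∈ F, p.1 + p.2 ≤ b := fun p hp => le_csSup hUbdd ⟨p, hp, rfl⟩
    have hvc : ∀ p ∈ F, c ≤ p.1 - p.2 := fun p hp => csInf_le hVbddb ⟨p, hp, rfl⟩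
    have hve : ∀ p ∈ F, p.1 - p.2 ≤ e := fun p hp => le_csSup hVbdd ⟨p, hp, rfl⟩
    have hba : b - a ≤ l1diam F := by
      have hb' : b ≤ a + l1diam F := by
        apply csSup_le hUne
        rintro x ⟨p, hp, rfl⟩
        have h' : p.1 + p.2 - l1diam F ≤ a := by
          apply le_csInf hUne
          rintro y ⟨q, hq, rfl⟩
          have h1 := hdist p hp q hq
          have h2 : p.1 + p.2 - (q.1 + q.2) ≤ l1dist p q := by
            unfold l1dist
            have := le_abs_self (p.1 - q.1); have := le_abs_self (p.2 - q.2)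
            linarith
          dsimp only; linarith
        dsimp only; linarith
      linarith
    have hec : e - c ≤ l1diam F := by
      have hb' : e ≤ c + l1diam F := by
        apply csSup_le hVne
        rintro x ⟨p, hp, rfl⟩
        have h' : p.1 - p.2 - l1diam F ≤ c := by
          apply le_csInf hVne
          rintro y ⟨q, hq, rfl⟩
          have h1 := hdist p hp q hq
          have h2 : p.1 - p.2 - (q.1 - q.2) ≤ l1dist p q := by
            unfold l1dist
            have := le_abs_self (p.1 - q.1); have := neg_abs_le (p.2 - q.2)
            linarith
          dsimp only; linarith
        dsimp only; linarith
      linarith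
    refine ⟨{p | p ∈ F ∧ p.1 + p.2 ≤ (a+b)/2 ∧ p.1 - p.2 ≤ (c+e)/2},
            {p | p ∈ F ∧ p.1 + p.2 ≤ (a+b)/2 ∧ (c+e)/2 ≤ p.1 - p.2},
            {p | p ∈ F ∧ (a+b)/2 ≤ p.1 + p.2 ∧ p.1 - p.2 ≤ (c+e)/2},
            {p | p ∈ F ∧ (a+b)/2 ≤ p.1 + p.2 ∧ (c+e)/2 ≤ p.1 - p.2}, ?_, ?_, ?_, ?_, ?_⟩
    · ext p
      constructor
      · intro hp
        rcases le_total (p.1 + p.2) ((a+b)/2) with h1 | h1 <;>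
          rcases le_total (p.1 - p.2) ((c+e)/2) with h2 | h2
        · exact Or.inl (Or.inl (Or.inl ⟨hp, h1, h2⟩))
        · exact Or.inl (Or.inl (Or.inr ⟨hp, h1, h2⟩))
        · exact Or.inl (Or.inr ⟨hp, h1, h2⟩)
        · exact Or.inr ⟨hp, h1, h2⟩
      · rintro (((⟨h, -⟩ | ⟨h, -⟩) | ⟨h, -⟩) | ⟨h, -⟩) <;> exact h
    all_goals {
      refine lt_of_le_of_lt (l1diam_le (k := l1diam F / 2) (by linarith) ?_) (by linarith)
      rintro p ⟨hpF, hpu, hpv⟩ q ⟨hqF, hqu, hqv⟩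
      apply l1dist_le_of (k := l1diam F / 2)
      · have h1 := hua p hpF; have h2 := hua q hqF
        have h3 := hub p hpF; have h4 := hub q hqF
        rw [abs_le]; constructor <;> linarith
      · have h1 := hvc p hpF; have h2 := hvc q hqF
        have h3 := hve p hpF; have h4 := hve q hqF
        rw [abs_le]; constructor <;> linarith }
  · -- part (b)
    have ballbd : ∀ p ∈ {p : ℝ × ℝ | |p.1| + |p.2| ≤ 1}, ∀ q ∈ {p : ℝ × ℝ | |p.1| + |p.2| ≤ 1},
        l1dist p q ≤ 2 := by
      intro p hp q hq
      have c1 := abs_sub'' p.1 q.1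
      have c2 := abs_sub'' p.2 q.2
      simp only [Set.mem_setOf_eq] at hp hq
      unfold l1dist
      linarith
    constructor
    · apply le_antisymm
      · exact Real.sSup_le (by rintro r ⟨p, hp, q, hq, rfl⟩; exact ballbd p hp q hq) (by norm_num)
      · apply le_csSup
        · refine ⟨2, ?_⟩
          rintro r ⟨p, hp, q, hq, rfl⟩
          exact ballbd p hp q hq
        · refine ⟨((1:ℝ), (0:ℝ)), by norm_num, ((-1:ℝ), (0:ℝ)), by norm_num, ?_⟩
          norm_num [l1dist]
    · rintro ⟨A, B, C, hun, hA, hB, hC⟩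
      have keyF : ∀ {S : Set (ℝ × ℝ)} {p q : ℝ × ℝ},
          S ⊆ {p : ℝ × ℝ | |p.1| + |p.2| ≤ 1} → l1diam S < 2 →
          p ∈ S → q ∈ S → l1dist p q = 2 → False := by
        intro S p q hsub hlt hp hq heq
        have h2 : (2:ℝ) ≤ l1diam S := by
          apply le_csSup
          · refine ⟨2, ?_⟩
            rintro r ⟨p', hp', q', hq', rfl⟩
            exact ballbd p' (hsub hp') q' (hsub hq')
          · exact ⟨p, hp, q, hq, heq⟩
        linarith
      have hsubA : A ⊆ {p : ℝ × ℝ | |p.1| + |p.2| ≤ 1} := by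
        rw [hun]; exact Set.subset_union_left.trans Set.subset_union_left
      have hsubB : B ⊆ {p : ℝ × ℝ | |p.1| + |p.2| ≤ 1} := by
        rw [hun]; exact Set.subset_union_right.trans Set.subset_union_left
      have hsubC : C ⊆ {p : ℝ × ℝ | |p.1| + |p.2| ≤ 1} := by
        rw [hun]; exact Set.subset_union_right
      have h1 : ((1:ℝ), (0:ℝ)) ∈ A ∪ B ∪ C := by rw [← hun]; norm_num
      have h2 : ((0:ℝ), (1:ℝ)) ∈ A ∪ B ∪ C := by rw [← hun]; norm_num
      have h3 : ((-1:ℝ), (0:ℝ)) ∈ A ∪ B ∪ C := by rw [← hun]; norm_num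
      have h4 : ((0:ℝ), (-1:ℝ)) ∈ A ∪ B ∪ C := by rw [← hun]; norm_num
      have d12 : l1dist ((1:ℝ), (0:ℝ)) ((0:ℝ), (1:ℝ)) = 2 := by norm_num [l1dist]
      have d13 : l1dist ((1:ℝ), (0:ℝ)) ((-1:ℝ), (0:ℝ)) = 2 := by norm_num [l1dist]
      have d14 : l1dist ((1:ℝ), (0:ℝ)) ((0:ℝ), (-1:ℝ)) = 2 := by norm_num [l1dist]
      have d23 : l1dist ((0:ℝ), (1:ℝ)) ((-1:ℝ), (0:ℝ)) = 2 := by norm_num [l1dist]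
      have d24 : l1dist ((0:ℝ), (1:ℝ)) ((0:ℝ), (-1:ℝ)) = 2 := by norm_num [l1dist]
      have d34 : l1dist ((-1:ℝ), (0:ℝ)) ((0:ℝ), (-1:ℝ)) = 2 := by norm_num [l1dist]
      rcases h1 with (h1 | h1) | h1 <;> rcases h2 with (h2 | h2) | h2 <;>
        rcases h3 with (h3 | h3) | h3 <;> rcases h4 with (h4 | h4) | h4 <;>
        first
          | exact keyF hsubA hA h1 h2 d12
          | exact keyF hsubB hB h1 h2 d12
          | exact keyF hsubC hC h1 h2 d12
          | exact keyF hsubA hA h1 h3 d13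
          | exact keyF hsubB hB h1 h3 d13
          | exact keyF hsubC hC h1 h3 d13
          | exact keyF hsubA hA h1 h4 d14
          | exact keyF hsubB hB h1 h4 d14
          | exact keyF hsubC hC h1 h4 d14
          | exact keyF hsubA hA h2 h3 d23
          | exact keyF hsubB hB h2 h3 d23
          | exact keyF hsubC hC h2 h3 d23
          | exact keyF hsubA hA h2 h4 d24
          | exact keyF hsubB hB h2 h4 d24
          | exact keyF hsubC hC h2 h4 d24
          | exact keyF hsubA hA h3 h4 d34
          | exact keyF hsubB hB h3 h4 d34
          | exact keyF hsubC hC h3 h4 d34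
end

section
/- There is no continuous map f from the space X = { (x₁,x₂,x₃) ∈ (ℝ²)³ : ¬(x₁ = x₂ = x₃) } to the space Y = { (a,b,c) ∈ ℝ³ : ¬(a = b = c) } that is equivariant for the cyclic permutation actions of ℤ/3, i.e., satisfying f(x₂, x₃, x₁) = σ(f(x₁, x₂, x₃)) for all (x₁,x₂,x₃) ∈ X, where σ(a,b,c) = (b,c,a). -/
/-!
Let `ζ = e^{2πi/3}`. The map `(a, b, c) ↦ a + bζ + cζ²` sends `Y` to `ℂ \ {0}` and turns the
cyclic shift into multiplication by `ζ²`. The rotating equilateral triangle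
`t ↦ (ω, ωζ, ωζ²)`, `ω = e^{2πit}`, is a loop in `X` that the shift advances by a third of a
turn, so an equivariant `f` would give a loop `κ` in `ℂ \ {0}` with `κ (t + 1/3) = ζ² κ t`.
The change of a continuous logarithm of `κ` over a full turn is then three times its change
`δ` over a third of a turn, where `e^δ = ζ² ≠ 1`; hence it is nonzero. But the triangle
contracts in `X` (shrink it to the origin while moving its third vertex to `1`), and a
continuous logarithm of the whole homotopy, which exists because `exp` is a covering map and
`ℝ²` is simply connected, shows that this change must vanish.
-/

open Complex
open scoped Real

namespace Complex

variable {A : Type*} [TopologicalSpace A]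

theorem const_of_exp_comp [PreconnectedSpace A] {g : A → ℂ} (hg : Continuous g)
    (he : ∀ a a', exp (g a) = exp (g a')) (a a' : A) : g a = g a' :=
  isCoveringMap_exp.const_of_comp hg (fun a a' ↦ Subtype.ext (he a a')) a a'

theorem exists_continuous_exp_comp_eq [SimplyConnectedSpace A] [LocallyPathConnectedSpace A]
    {f : A → ℂ} (hf : Continuous f) (hf₀ : ∀ a, f a ≠ 0) :
    ∃ g : A → ℂ, Continuous g ∧ ∀ a, exp (g a) = f a := by
  obtain ⟨a₀⟩ := PathConnectedSpace.nonempty (X := A)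
  obtain ⟨g, ⟨-, hg⟩, -⟩ := isCoveringMapOn_exp.existsUnique_continuousMap_lifts ⟨f, hf⟩
    (exp_log (hf₀ a₀)) hf₀
  exact ⟨g, g.continuous, congrFun hg⟩

theorem sub_eq_nat_mul_of_exp_add_eq_mul {g : ℝ → ℂ} (hg : Continuous g) {p : ℝ} {c : ℂ}
    (h : ∀ t, exp (g (t + p)) = c * exp (g t)) (k : ℕ) :
    g (k * p) - g 0 = k * (g p - g 0) := by
  have hstep (t : ℝ) : g (t + p) - g t = g p - g 0 := by
    have hexp (t : ℝ) : exp (g (t + p) - g t) = c := by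
      rw [exp_sub, h, mul_div_cancel_right₀ _ (exp_ne_zero _)]
    simpa using const_of_exp_comp (by fun_prop) (fun a a' ↦ (hexp a).trans (hexp a').symm) t 0
  induction k with
  | zero => simp
  | succ k ih =>
    push_cast
    rw [add_one_mul]
    linear_combination ih + hstep (k * p)

theorem eq_one_of_loop_homotopy_of_shift_eq_mul {K : ℝ × ℝ → ℂ} (hK : Continuous K)
    (hK₀ : ∀ x, K x ≠ 0) (hloop : ∀ s, K (s, 1) = K (s, 0)) (hconst : ∀ t, K (1, t) = K (1, 0))
    {n : ℕ} (hn : n ≠ 0) {c : ℂ} (hshift : ∀ t, K (0, t + (n : ℝ)⁻¹) = c * K (0, t)) :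
    c = 1 := by
  obtain ⟨L, hL, hLK⟩ := exists_continuous_exp_comp_eq hK hK₀
  have hwinding : L (0, 1) - L (0, 0) = L (1, 1) - L (1, 0) := by
    refine const_of_exp_comp (g := fun s ↦ L (s, 1) - L (s, 0)) (by fun_prop) (fun a a' ↦ ?_) 0 1
    simp only [exp_sub, hLK, hloop, div_self (hK₀ _)]
  have hwinding_one : L (1, 1) = L (1, 0) :=
    const_of_exp_comp (g := fun t ↦ L (1, t)) (by fun_prop)
      (fun a a' ↦ by simp only [hLK, hconst]) 1 0
  have hwinding_zero : L (0, 1) - L (0, 0) = n * (L (0, (n : ℝ)⁻¹) - L (0, 0)) := by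
    simpa [hn] using sub_eq_nat_mul_of_exp_add_eq_mul (g := fun t ↦ L (0, t))
      (p := (n : ℝ)⁻¹) (c := c) (by fun_prop)
      (fun t ↦ by simp only [hLK, hshift]) n
  have hc : exp (L (0, (n : ℝ)⁻¹) - L (0, 0)) = c := by
    rw [exp_sub, hLK, hLK, ← zero_add ((n : ℝ)⁻¹), hshift, mul_div_cancel_right₀ _ (hK₀ _)]
  rw [hwinding_one, sub_self, hwinding_zero, mul_eq_zero] at hwinding
  rw [← hc, hwinding.resolve_left (Nat.cast_ne_zero.2 hn), exp_zero]

end Complex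

noncomputable def cubeRootOfUnity : ℂ := exp (2 * π * I / 3)

theorem isPrimitiveRoot_cubeRootOfUnity : IsPrimitiveRoot cubeRootOfUnity 3 :=
  isPrimitiveRoot_exp 3 three_ne_zero

theorem cubeRootOfUnity_im_ne_zero : cubeRootOfUnity.im ≠ 0 := by
  rw [cubeRootOfUnity, show 2 * π * I / 3 = ((2 * π / 3 : ℝ) : ℂ) * I by push_cast; ring,
    exp_ofReal_mul_I_im]
  exact (Real.sin_pos_of_pos_of_lt_pi (by positivity) (by linarith [Real.pi_pos])).ne'

theorem cubeRootOfUnity_sq_add_self_add_one : cubeRootOfUnity ^ 2 + cubeRootOfUnity + 1 = 0 := by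
  have h := isPrimitiveRoot_cubeRootOfUnity.geom_sum_eq_zero (by norm_num)
  simp only [Finset.sum_range_succ, Finset.sum_range_zero] at h
  linear_combination h

section CyclicFourier

variable (ζ : ℂ)

/-- `a + bζ + cζ²`, rewritten with `1 + ζ + ζ² = 0`. -/
def cyclicFourier (w : ℝ × ℝ × ℝ) : ℂ := (w.1 - w.2.2 : ℝ) + (w.2.1 - w.2.2 : ℝ) * ζ

theorem continuous_cyclicFourier : Continuous (cyclicFourier ζ) := by
  unfold cyclicFourier; fun_prop

variable {ζ}

theorem cyclicFourier_rotate (hζ : ζ ^ 2 + ζ + 1 = 0) (w : ℝ × ℝ × ℝ) :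
    cyclicFourier ζ (w.2.1, w.2.2, w.1) = ζ ^ 2 * cyclicFourier ζ w := by
  simp only [cyclicFourier]
  push_cast
  linear_combination (w.2.2 - w.1 - (w.2.1 - w.2.2) * (ζ - 1)) * hζ

theorem cyclicFourier_ne_zero (hζ : ζ.im ≠ 0) {w : ℝ × ℝ × ℝ}
    (hw : ¬ (w.1 = w.2.1 ∧ w.2.1 = w.2.2)) : cyclicFourier ζ w ≠ 0 := by
  intro h
  have him : (w.2.1 - w.2.2) * ζ.im = 0 := by simpa [cyclicFourier] using congrArg im h
  have hre : w.1 - w.2.2 + (w.2.1 - w.2.2) * ζ.re = 0 := by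
    simpa [cyclicFourier] using congrArg re h
  have h23 : w.2.1 = w.2.2 := sub_eq_zero.1 ((mul_eq_zero.1 him).resolve_right hζ)
  rw [h23, sub_self, zero_mul, add_zero, sub_eq_zero] at hre
  exact hw ⟨hre.trans h23.symm, h23⟩

end CyclicFourier

noncomputable def triangleHomotopy (s t : ℝ) : ℂ × ℂ × ℂ :=
  let z := (1 - s) * exp (2 * π * I * t)
  (z, z * cubeRootOfUnity, z * cubeRootOfUnity ^ 2 + s)

theorem continuous_triangleHomotopy :
    Continuous fun p : ℝ × ℝ ↦ triangleHomotopy p.1 p.2 := by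
  unfold triangleHomotopy; fun_prop

theorem triangleHomotopy_not_all_eq (s t : ℝ) :
    ¬ ((triangleHomotopy s t).1 = (triangleHomotopy s t).2.1 ∧
      (triangleHomotopy s t).2.1 = (triangleHomotopy s t).2.2) := by
  rintro ⟨h₁₂, h₂₃⟩
  simp only [triangleHomotopy] at h₁₂ h₂₃
  have hz : (1 - s) * exp (2 * π * I * t) = 0 := by
    by_contra hz
    exact isPrimitiveRoot_cubeRootOfUnity.ne_one (by norm_num) ((mul_eq_left₀ hz).1 h₁₂.symm)
  rw [hz, zero_mul, zero_mul, zero_add, eq_comm, ofReal_eq_zero] at h₂₃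
  simp [h₂₃, exp_ne_zero] at hz

theorem triangleHomotopy_one_right (s : ℝ) : triangleHomotopy s 1 = triangleHomotopy s 0 := by
  simp [triangleHomotopy]

theorem triangleHomotopy_one_left (t : ℝ) : triangleHomotopy 1 t = triangleHomotopy 1 0 := by
  simp [triangleHomotopy]

theorem triangleHomotopy_zero_add_third (t : ℝ) :
    triangleHomotopy 0 (t + 3⁻¹) =
      ((triangleHomotopy 0 t).2.1, (triangleHomotopy 0 t).2.2, (triangleHomotopy 0 t).1) := by
  have hω : exp (2 * π * I * ↑(t + 3⁻¹ : ℝ)) = exp (2 * π * I * t) * cubeRootOfUnity := by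
    rw [cubeRootOfUnity, ← exp_add]; push_cast; ring_nf
  have h3 := isPrimitiveRoot_cubeRootOfUnity.pow_eq_one
  simp only [triangleHomotopy, hω, ofReal_zero, sub_zero, one_mul, add_zero, Prod.mk.injEq]
  exact ⟨trivial, by ring, by linear_combination exp (2 * π * I * t) * h3⟩

/-- There is no continuous map from the complement of the diagonal in `(ℝ²)³` to the
complement of the diagonal line in `ℝ³` that is equivariant for the cyclic `ℤ/3`-actions
permuting the coordinates. -/
theorem no_equivariant_map_diagonal_complements :
    ¬ ∃ f : {v : EuclideanSpace ℝ (Fin 2) × EuclideanSpace ℝ (Fin 2) × EuclideanSpace ℝ (Fin 2) //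
              ¬ (v.1 = v.2.1 ∧ v.2.1 = v.2.2)} →
            {w : ℝ × ℝ × ℝ // ¬ (w.1 = w.2.1 ∧ w.2.1 = w.2.2)},
      Continuous f ∧
      ∀ (v : EuclideanSpace ℝ (Fin 2) × EuclideanSpace ℝ (Fin 2) × EuclideanSpace ℝ (Fin 2))
        (hv : ¬ (v.1 = v.2.1 ∧ v.2.1 = v.2.2))
        (hv' : ¬ (v.2.1 = v.2.2 ∧ v.2.2 = v.1)),
        ((f ⟨(v.2.1, v.2.2, v.1), hv'⟩ : ℝ × ℝ × ℝ)) =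
          (((f ⟨v, hv⟩ : ℝ × ℝ × ℝ)).2.1, ((f ⟨v, hv⟩ : ℝ × ℝ × ℝ)).2.2,
            ((f ⟨v, hv⟩ : ℝ × ℝ × ℝ)).1) := by
  rintro ⟨f, hf, hequiv⟩
  let e := Complex.orthonormalBasisOneI.repr
  let γ (p : ℝ × ℝ) : {v : EuclideanSpace ℝ (Fin 2) × EuclideanSpace ℝ (Fin 2) ×
      EuclideanSpace ℝ (Fin 2) // ¬ (v.1 = v.2.1 ∧ v.2.1 = v.2.2)} :=
    ⟨Prod.map e (Prod.map e e) (triangleHomotopy p.1 p.2), by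
      simpa [e.injective.eq_iff] using triangleHomotopy_not_all_eq p.1 p.2⟩
  refine isPrimitiveRoot_cubeRootOfUnity.pow_ne_one_of_pos_of_lt two_ne_zero (by norm_num) <|
    eq_one_of_loop_homotopy_of_shift_eq_mul (K := fun p ↦ cyclicFourier cubeRootOfUnity (f (γ p)))
      ?_ (fun p ↦ cyclicFourier_ne_zero cubeRootOfUnity_im_ne_zero (f (γ p)).2)
      (fun s ↦ by simp only [γ, triangleHomotopy_one_right])
      (fun t ↦ by simp only [γ, triangleHomotopy_one_left]) three_ne_zero (fun t ↦ ?_)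
  · exact (continuous_cyclicFourier _).comp (continuous_subtype_val.comp (hf.comp
      (((e.continuous.prodMap (e.continuous.prodMap e.continuous)).comp
        continuous_triangleHomotopy).subtype_mk _)))
  · have hγ : γ (0, t + ((3 : ℕ) : ℝ)⁻¹) = ⟨((γ (0, t)).1.2.1, (γ (0, t)).1.2.2, (γ (0, t)).1.1),
        fun h ↦ (γ (0, t)).2 ⟨h.2.symm.trans h.1.symm, h.1⟩⟩ := by
      ext1
      simp only [γ, Nat.cast_ofNat, triangleHomotopy_zero_add_third]
      rfl
    rw [hγ, hequiv, cyclicFourier_rotate cubeRootOfUnity_sq_add_self_add_one]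
end
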